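/- Let the Gauss–Lobatto angles θ_i ∈ [0,π] be defined by ξ_{i,N} = cos θ_i, where ξ_{i,N} are the N+1 Gauss–Lobatto nodes. Then θ_i ∈ [2iπ/(2N+1), (2i+1)π/(2N+1)] for 0 ≤ i ≤ N (Sündermann's estimate). -/

import Mathlib

/-!
Put `F(θ) = sin^{3/2} θ · P_N'(cos θ)`. Since `P_N'` solves the Gegenbauer equation
`(x² - 1) u'' + 4x u' + 2u = N(N+1) u`, the function `F` solves `F'' + Q F = 0` on `(0, π)` with
`Q = (N + 1/2)² - 3 / (4 sin² θ) < (N + 1/2)²`. On `[0, π]` the zeros of `F` are exactly the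
Gauss–Lobatto angles `θ_0 = 0 < θ_1 < ⋯ < θ_N = π`, so by Sturm comparison each of
`sin((N + 1/2) θ)` and `cos((N + 1/2) θ)` vanishes in every gap `(θ_j, θ_{j+1})`. Their zeros
`2kπ/(2N+1)` and `(2k+1)π/(2N+1)` increase with `k`; counting them through the `N` gaps, starting
from `θ_0 = 0` for the first family and from `θ_N = π` for the second, traps `θ_i` between the
`i`-th zero of each.
-/

open Polynomial

/-- The Legendre polynomial `P_n`, via the Rodrigues formula. -/
noncomputable def legendreP (n : ℕ) : Polynomial ℝ :=
  Polynomial.C (1 / ((2 : ℝ) ^ n * n.factorial)) *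
    (Polynomial.derivative^[n] ((Polynomial.X ^ 2 - 1) ^ n))

open Set Filter Topology Real

namespace Polynomial

variable {R : Type*} [CommRing R]

theorem iterate_derivative_X_mul (m : ℕ) (h : R[X]) :
    derivative^[m + 1] (X * h) =
      X * derivative^[m + 1] h + ((m : R[X]) + 1) * derivative^[m] h := by
  induction m generalizing h with
  | zero => simp [derivative_mul, add_comm]
  | succ m ih =>
    rw [Function.iterate_succ_apply', ih, Function.iterate_succ_apply' _ (m + 1),
      Function.iterate_succ_apply' _ m]
    simp only [derivative_add, derivative_mul, derivative_X, derivative_natCast,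
      derivative_one]
    push_cast
    ring

theorem iterate_derivative_X_sq_sub_one_mul (m : ℕ) (h : R[X]) :
    derivative^[m + 2] ((X ^ 2 - 1) * h) =
      (X ^ 2 - 1) * derivative^[m + 2] h + 2 * ((m : R[X]) + 2) * X * derivative^[m + 1] h +
        ((m : R[X]) + 2) * ((m : R[X]) + 1) * derivative^[m] h := by
  rw [show (X ^ 2 - 1) * h = X * (X * h) - h by ring, iterate_derivative_sub,
    iterate_derivative_X_mul (m + 1), iterate_derivative_X_mul, iterate_derivative_X_mul m]
  push_cast
  ring

/-- Obtained by differentiating `(X² - 1) w' = 2n X w`, for `w = (X² - 1)ⁿ`, `n + 1` times. -/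
theorem iterate_derivative_X_sq_sub_one_pow_ode (n : ℕ) :
    let P : R[X] := derivative^[n] ((X ^ 2 - 1) ^ n)
    (X ^ 2 - 1) * derivative (derivative P) + 2 * X * derivative P =
      ((n : R[X]) * ((n : R[X]) + 1)) * P := by
  intro P
  cases n with
  | zero => simp [P]
  | succ n =>
  have key : (X ^ 2 - 1) * derivative ((X ^ 2 - 1 : R[X]) ^ (n + 1)) =
      ((2 * (n + 1) : ℕ) : R[X]) * (X * (X ^ 2 - 1) ^ (n + 1)) := by
    rw [derivative_pow]
    simp only [derivative_sub, derivative_X_pow, derivative_one, map_natCast]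
    push_cast
    ring
  have h := congrArg (derivative^[n + 2]) key
  rw [iterate_derivative_X_sq_sub_one_mul, iterate_derivative_natCast_mul,
    iterate_derivative_X_mul (n + 1)] at h
  simp only [← Function.iterate_succ_apply] at h
  simp only [P, ← Function.iterate_succ_apply']
  push_cast at h ⊢
  linear_combination h

theorem isRoot_iff_mem_of_natDegree_le_card [IsDomain R] {p : R[X]} {s : Finset R} (hp : p ≠ 0)
    (hs : ∀ x ∈ s, p.IsRoot x) (hcard : p.natDegree ≤ s.card) (x : R) : p.IsRoot x ↔ x ∈ s := by
  classical
  have hsub : s ⊆ p.roots.toFinset := fun y hy =>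
    Multiset.mem_toFinset.2 ((mem_roots hp).2 (hs y hy))
  have hseq : s = p.roots.toFinset := Finset.eq_of_subset_of_card_le hsub
    ((Multiset.toFinset_card_le _).trans ((card_roots' p).trans hcard))
  rw [hseq, Multiset.mem_toFinset, mem_roots hp]

end Polynomial

theorem legendreP_ode (n : ℕ) :
    (X ^ 2 - 1) * derivative (derivative (legendreP n)) + 2 * X * derivative (legendreP n) =
      ((n : ℝ[X]) * ((n : ℝ[X]) + 1)) * legendreP n := by
  have h := iterate_derivative_X_sq_sub_one_pow_ode (R := ℝ) n
  simp only [legendreP, derivative_C_mul]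
  linear_combination C (1 / ((2 : ℝ) ^ n * n.factorial)) * h

theorem derivative_legendreP_ode (n : ℕ) :
    (X ^ 2 - 1) * derivative (derivative (derivative (legendreP n))) +
        4 * X * derivative (derivative (legendreP n)) + 2 * derivative (legendreP n) =
      C ((n : ℝ) * (n + 1)) * derivative (legendreP n) := by
  have h := congrArg derivative (legendreP_ode n)
  simp only [derivative_add, derivative_mul, derivative_sub, derivative_X_sq, derivative_X,
    derivative_one, derivative_natCast, derivative_ofNat, map_ofNat] at h
  simp only [map_mul, map_add, map_natCast, map_one]
  linear_combination h

theorem natDegree_legendreP (n : ℕ) : (legendreP n).natDegree = n := by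
  have hmonic : (X ^ 2 - 1 : ℝ[X]).Monic := by
    simpa using monic_X_pow_sub_C (1 : ℝ) two_ne_zero
  have hdeg : ((X ^ 2 - 1 : ℝ[X]) ^ n).natDegree = 2 * n := by
    rw [hmonic.natDegree_pow, show (X ^ 2 - 1 : ℝ[X]) = X ^ 2 - C 1 by simp,
      natDegree_X_pow_sub_C, mul_comm]
  apply natDegree_eq_of_le_of_coeff_ne_zero
  · refine (natDegree_C_mul_le _ _).trans ((natDegree_iterate_derivative _ _).trans ?_)
    omega
  · rw [legendreP, coeff_C_mul, coeff_iterate_derivative, ← two_mul, ← hdeg,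
      (hmonic.pow n).coeff_natDegree, hdeg, nsmul_one]
    have : (0 : ℝ) < (2 * n).descFactorial n := mod_cast Nat.descFactorial_pos.mpr (by omega)
    positivity

theorem IsPreconnected.forall_pos_or_forall_neg {X : Type*} [TopologicalSpace X] {s : Set X}
    {f : X → ℝ} (hs : IsPreconnected s) (hf : ContinuousOn f s) (h0 : ∀ x ∈ s, f x ≠ 0) :
    (∀ x ∈ s, 0 < f x) ∨ ∀ x ∈ s, f x < 0 := by
  by_contra! h
  obtain ⟨⟨x, hx, hfx⟩, y, hy, hfy⟩ := h
  obtain ⟨z, hz, hfz⟩ := hs.intermediate_value hx hy hf ⟨hfx, hfy⟩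
  exact h0 z hz hfz

section Endpoints

variable {f f' : ℝ → ℝ} {a b : ℝ}

theorem nonneg_at_left_endpoint_of_hasDerivAt (hab : a < b)
    (hf : ContinuousWithinAt f (Ioo a b) a) (hf' : ContinuousWithinAt f' (Ioo a b) a)
    (hdf : ∀ x ∈ Ioo a b, HasDerivAt f (f' x) x) (hfa : f a = 0)
    (hpos : ∀ x ∈ Ioo a b, 0 ≤ f x) : 0 ≤ f' a := by
  have hd : HasDerivWithinAt f (f' a) (Ici a) a := by
    refine hasDerivWithinAt_Ici_of_tendsto_deriv
      (fun x hx => (hdf x hx).differentiableAt.differentiableWithinAt) hf (Ioo_mem_nhdsGT hab) ?_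
    rw [← nhdsWithin_Ioo_eq_nhdsGT hab]
    refine hf'.tendsto.congr' ?_
    filter_upwards [self_mem_nhdsWithin] with x hx using (hdf x hx).deriv.symm
  have hslope := hasDerivWithinAt_iff_tendsto_slope.mp hd
  rw [Ici_sdiff_left] at hslope
  refine ge_of_tendsto hslope ?_
  filter_upwards [Ioo_mem_nhdsGT hab] with x hx
  rw [slope_def_field, hfa, sub_zero]
  exact div_nonneg (hpos x hx) (sub_nonneg.2 hx.1.le)

theorem nonpos_at_right_endpoint_of_hasDerivAt (hab : a < b)
    (hf : ContinuousWithinAt f (Ioo a b) b) (hf' : ContinuousWithinAt f' (Ioo a b) b)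
    (hdf : ∀ x ∈ Ioo a b, HasDerivAt f (f' x) x) (hfb : f b = 0)
    (hpos : ∀ x ∈ Ioo a b, 0 ≤ f x) : f' b ≤ 0 := by
  have hd : HasDerivWithinAt f (f' b) (Iic b) b := by
    refine hasDerivWithinAt_Iic_of_tendsto_deriv
      (fun x hx => (hdf x hx).differentiableAt.differentiableWithinAt) hf (Ioo_mem_nhdsLT hab) ?_
    rw [← nhdsWithin_Ioo_eq_nhdsLT hab]
    refine hf'.tendsto.congr' ?_
    filter_upwards [self_mem_nhdsWithin] with x hx using (hdf x hx).deriv.symm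
  have hslope := hasDerivWithinAt_iff_tendsto_slope.mp hd
  rw [Iic_sdiff_right] at hslope
  refine le_of_tendsto hslope ?_
  filter_upwards [Ioo_mem_nhdsLT hab] with x hx
  rw [slope_def_field, hfb, sub_zero]
  exact div_nonpos_of_nonneg_of_nonpos (hpos x hx) (sub_nonpos.2 hx.2.le)

end Endpoints

def AreConsecutiveZeros (f : ℝ → ℝ) (a b : ℝ) : Prop :=
  a < b ∧ f a = 0 ∧ f b = 0 ∧ ∀ x ∈ Ioo a b, f x ≠ 0

section Sturm

variable {f f' g g' p q : ℝ → ℝ} {a b : ℝ}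

/-- The Wronskian `f' g - f g'` increases strictly on `[a, b]`, yet the boundary behaviour of `f`
makes it `≥ 0` at `a` and `≤ 0` at `b`. -/
theorem sturm_comparison_of_pos (hab : a < b)
    (hf : ContinuousOn f (Icc a b)) (hf' : ContinuousOn f' (Icc a b))
    (hg : ContinuousOn g (Icc a b)) (hg' : ContinuousOn g' (Icc a b))
    (hdf : ∀ x ∈ Ioo a b, HasDerivAt f (f' x) x)
    (hdf' : ∀ x ∈ Ioo a b, HasDerivAt f' (-(p x) * f x) x)
    (hdg : ∀ x ∈ Ioo a b, HasDerivAt g (g' x) x)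
    (hdg' : ∀ x ∈ Ioo a b, HasDerivAt g' (-(q x) * g x) x)
    (hpq : ∀ x ∈ Ioo a b, p x < q x) (hfa : f a = 0) (hfb : f b = 0)
    (hf0 : ∀ x ∈ Ioo a b, 0 < f x) (hg0 : ∀ x ∈ Ioo a b, 0 < g x) : False := by
  have ha : a ∈ Icc a b := left_mem_Icc.2 hab.le
  have hb : b ∈ Icc a b := right_mem_Icc.2 hab.le
  set W : ℝ → ℝ := fun x => f' x * g x - f x * g' x
  have hW : StrictMonoOn W (Icc a b) := by
    refine strictMonoOn_of_hasDerivWithinAt_pos (convex_Icc a b) ((hf'.mul hg).sub (hf.mul hg'))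
      (f' := fun x => (q x - p x) * (f x * g x)) (fun x hx => ?_) (fun x hx => ?_)
    all_goals rw [interior_Icc] at hx
    · exact (((hdf' x hx).mul (hdg x hx)).sub ((hdf x hx).mul (hdg' x hx))).hasDerivWithinAt
        |>.congr_deriv (by ring)
    · exact mul_pos (sub_pos.2 (hpq x hx)) (mul_pos (hf0 x hx) (hg0 x hx))
  have hf'a : 0 ≤ f' a := nonneg_at_left_endpoint_of_hasDerivAt hab
    ((hf a ha).mono Ioo_subset_Icc_self) ((hf' a ha).mono Ioo_subset_Icc_self) hdf hfa
    fun x hx => (hf0 x hx).le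
  have hf'b : f' b ≤ 0 := nonpos_at_right_endpoint_of_hasDerivAt hab
    ((hf b hb).mono Ioo_subset_Icc_self) ((hf' b hb).mono Ioo_subset_Icc_self) hdf hfb
    fun x hx => (hf0 x hx).le
  have hg_nonneg : ∀ x ∈ Icc a b, 0 ≤ g x := by
    rw [← closure_Ioo hab.ne] at hg ⊢
    exact le_on_closure (fun x hx => (hg0 x hx).le) continuousOn_const hg
  have hWab := hW ha hb hab
  simp only [W, hfa, hfb, zero_mul, sub_zero] at hWab
  nlinarith [mul_nonneg hf'a (hg_nonneg a ha), mul_nonneg (neg_nonneg.2 hf'b) (hg_nonneg b hb)]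

theorem AreConsecutiveZeros.exists_zero_of_sturm_comparison (hfab : AreConsecutiveZeros f a b)
    (hf : ContinuousOn f (Icc a b)) (hf' : ContinuousOn f' (Icc a b))
    (hg : ContinuousOn g (Icc a b)) (hg' : ContinuousOn g' (Icc a b))
    (hdf : ∀ x ∈ Ioo a b, HasDerivAt f (f' x) x)
    (hdf' : ∀ x ∈ Ioo a b, HasDerivAt f' (-(p x) * f x) x)
    (hdg : ∀ x ∈ Ioo a b, HasDerivAt g (g' x) x)
    (hdg' : ∀ x ∈ Ioo a b, HasDerivAt g' (-(q x) * g x) x)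
    (hpq : ∀ x ∈ Ioo a b, p x < q x) : ∃ x ∈ Ioo a b, g x = 0 := by
  obtain ⟨hab, hfa, hfb, hf0⟩ := hfab
  by_contra! hg0
  have sign : ∀ {h : ℝ → ℝ}, ContinuousOn h (Icc a b) → (∀ x ∈ Ioo a b, h x ≠ 0) →
      ∃ e : ℝ, ∀ x ∈ Ioo a b, 0 < e * h x := fun hh hh0 => by
    rcases isPreconnected_Ioo.forall_pos_or_forall_neg (hh.mono Ioo_subset_Icc_self) hh0 with h | h
    exacts [⟨1, by simpa using h⟩, ⟨-1, by simpa using h⟩]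
  obtain ⟨e₁, he₁⟩ := sign hf hf0
  obtain ⟨e₂, he₂⟩ := sign hg hg0
  exact sturm_comparison_of_pos (f := fun x => e₁ * f x) (f' := fun x => e₁ * f' x)
    (g := fun x => e₂ * g x) (g' := fun x => e₂ * g' x) hab
    (continuousOn_const.mul hf) (continuousOn_const.mul hf')
    (continuousOn_const.mul hg) (continuousOn_const.mul hg')
    (fun x hx => (hdf x hx).const_mul e₁)
    (fun x hx => ((hdf' x hx).const_mul e₁).congr_deriv (by ring))
    (fun x hx => (hdg x hx).const_mul e₂)
    (fun x hx => ((hdg' x hx).const_mul e₂).congr_deriv (by ring))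
    hpq (by simp [hfa]) (by simp [hfb]) he₁ he₂

end Sturm

/-- `sin^{3/2} θ · p(cos θ)`: when `p` solves `(x² - 1) p'' + 4x p' + 2p = m p`, this solves
`F'' + (m + 1/4 - 3 / (4 sin² θ)) F = 0` on `(0, π)`. -/
noncomputable def liouville (p : ℝ[X]) (θ : ℝ) : ℝ := √(sin θ) ^ 3 * p.eval (cos θ)

noncomputable def liouvilleDeriv (p : ℝ[X]) (θ : ℝ) : ℝ :=
  3 / 2 * √(sin θ) * cos θ * p.eval (cos θ) - √(sin θ) ^ 3 * sin θ * (derivative p).eval (cos θ)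

section Liouville

variable (p : ℝ[X]) {x : ℝ}

theorem continuous_liouville : Continuous (liouville p) := by
  unfold liouville; fun_prop

theorem continuous_liouvilleDeriv : Continuous (liouvilleDeriv p) := by
  unfold liouvilleDeriv; fun_prop

theorem Polynomial.hasDerivAt_eval_cos (x : ℝ) :
    HasDerivAt (fun θ => p.eval (cos θ)) (-sin x * (derivative p).eval (cos x)) x :=
  ((p.hasDerivAt (cos x)).comp x (hasDerivAt_cos x)).congr_deriv (by ring)

theorem hasDerivAt_sqrt_sin (hx : 0 < sin x) :
    HasDerivAt (fun θ => √(sin θ)) (cos x / (2 * √(sin x))) x :=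
  ((hasDerivAt_sqrt hx.ne').comp x (hasDerivAt_sin x)).congr_deriv (by ring)

theorem hasDerivAt_liouville (hx : 0 < sin x) :
    HasDerivAt (liouville p) (liouvilleDeriv p x) x := by
  have hA : 0 < √(sin x) := sqrt_pos.2 hx
  refine (((hasDerivAt_sqrt_sin hx).pow 3).mul (p.hasDerivAt_eval_cos x)).congr_deriv ?_
  simp only [liouvilleDeriv, Pi.pow_apply, Nat.cast_ofNat]
  set A := √(sin x)
  have hA2 : A ^ 2 = sin x := sq_sqrt hx.le
  rw [← hA2]
  field_simp
  ring

theorem hasDerivAt_liouvilleDeriv {m : ℝ}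
    (hp : (X ^ 2 - 1) * derivative (derivative p) + 4 * X * derivative p + 2 * p = C m * p)
    (hx : 0 < sin x) :
    HasDerivAt (liouvilleDeriv p) (-(m + 1 / 4 - 3 / (4 * sin x ^ 2)) * liouville p x) x := by
  have hA : 0 < √(sin x) := sqrt_pos.2 hx
  have hdA := hasDerivAt_sqrt_sin hx
  refine ((((hdA.const_mul (3 / 2 : ℝ)).mul (hasDerivAt_cos x)).mul (p.hasDerivAt_eval_cos x)).sub
    (((hdA.pow 3).mul (hasDerivAt_sin x)).mul
      ((derivative p).hasDerivAt_eval_cos x))).congr_deriv ?_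
  have hode := congrArg (eval (cos x)) hp
  simp only [eval_add, eval_mul, eval_sub, eval_pow, eval_X, eval_one, eval_C, eval_ofNat] at hode
  simp only [liouville, Pi.pow_apply, Pi.mul_apply, Nat.cast_ofNat]
  set A := √(sin x)
  set c := cos x
  have hA2 : A ^ 2 = sin x := sq_sqrt hx.le
  have hc : c ^ 2 - 1 = -A ^ 4 := by nlinarith [sin_sq_add_cos_sq x]
  rw [← hA2]
  field_simp
  linear_combination (-16 * A ^ 4) * hode +
    (12 * p.eval c + 16 * A ^ 4 * (derivative (derivative p)).eval c) * hc

theorem liouville_eq_zero_iff (hx : x ∈ Icc 0 π) :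
    liouville p x = 0 ↔ ((1 - X ^ 2) * p).IsRoot (cos x) := by
  have hs : 0 ≤ sin x := sin_nonneg_of_nonneg_of_le_pi hx.1 hx.2
  simp only [liouville, IsRoot.def, eval_mul, eval_sub, eval_one, eval_pow, eval_X, ← sin_sq,
    mul_eq_zero, pow_eq_zero_iff (n := 3) three_ne_zero, pow_eq_zero_iff (n := 2) two_ne_zero,
    sqrt_eq_zero hs]

variable {m : ℝ} {a b : ℝ}

theorem AreConsecutiveZeros.exists_zero_of_liouville
    (hp : (X ^ 2 - 1) * derivative (derivative p) + 4 * X * derivative p + 2 * p = C m * p)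
    (hab : AreConsecutiveZeros (liouville p) a b) (ha : 0 ≤ a) (hb : b ≤ π) {g g' : ℝ → ℝ}
    (hg : ∀ x, HasDerivAt g (g' x) x) (hg' : ∀ x, HasDerivAt g' (-(m + 1 / 4) * g x) x) :
    ∃ x ∈ Ioo a b, g x = 0 := by
  have hsin : ∀ x ∈ Ioo a b, 0 < sin x := fun x hx =>
    sin_pos_of_pos_of_lt_pi (ha.trans_lt hx.1) (hx.2.trans_le hb)
  have hgc : Continuous g := continuous_iff_continuousAt.2 fun x => (hg x).continuousAt
  have hg'c : Continuous g' := continuous_iff_continuousAt.2 fun x => (hg' x).continuousAt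
  refine hab.exists_zero_of_sturm_comparison (p := fun x => m + 1 / 4 - 3 / (4 * sin x ^ 2))
    (q := fun _ => m + 1 / 4) (continuous_liouville p).continuousOn
    (continuous_liouvilleDeriv p).continuousOn hgc.continuousOn hg'c.continuousOn
    (fun x hx => hasDerivAt_liouville p (hsin x hx))
    (fun x hx => hasDerivAt_liouvilleDeriv p hp (hsin x hx))
    (fun x _ => hg x) (fun x _ => hg' x) (fun x hx => ?_)
  have : 0 < 3 / (4 * sin x ^ 2) := by have := hsin x hx; positivity
  linarith

theorem AreConsecutiveZeros.exists_int_mul_pi_div_mem_Ioo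
    (hp : (X ^ 2 - 1) * derivative (derivative p) + 4 * X * derivative p + 2 * p = C m * p)
    (hab : AreConsecutiveZeros (liouville p) a b) (ha : 0 ≤ a) (hb : b ≤ π) {ω : ℝ}
    (hω : m + 1 / 4 = ω ^ 2) (hω0 : ω ≠ 0) : ∃ k : ℤ, k * π / ω ∈ Ioo a b := by
  obtain ⟨x, hx, hx0⟩ := hab.exists_zero_of_liouville p hp ha hb
    (g := fun θ => sin (ω * θ)) (g' := fun θ => ω * cos (ω * θ))
    (fun x => (((hasDerivAt_id' x).const_mul ω).sin).congr_deriv (by ring))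
    (fun x => ((((hasDerivAt_id' x).const_mul ω).cos).const_mul ω).congr_deriv
      (by linear_combination sin (ω * x) * hω))
  obtain ⟨k, hk⟩ := sin_eq_zero_iff.1 hx0
  exact ⟨k, by rwa [hk, mul_div_cancel_left₀ _ hω0]⟩

theorem AreConsecutiveZeros.exists_two_mul_int_add_one_mul_pi_div_mem_Ioo
    (hp : (X ^ 2 - 1) * derivative (derivative p) + 4 * X * derivative p + 2 * p = C m * p)
    (hab : AreConsecutiveZeros (liouville p) a b) (ha : 0 ≤ a) (hb : b ≤ π) {ω : ℝ}
    (hω : m + 1 / 4 = ω ^ 2) (hω0 : ω ≠ 0) : ∃ k : ℤ, (2 * k + 1) * π / (2 * ω) ∈ Ioo a b := by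
  obtain ⟨x, hx, hx0⟩ := hab.exists_zero_of_liouville p hp ha hb
    (g := fun θ => cos (ω * θ)) (g' := fun θ => -ω * sin (ω * θ))
    (fun x => (((hasDerivAt_id' x).const_mul ω).cos).congr_deriv (by ring))
    (fun x => ((((hasDerivAt_id' x).const_mul ω).sin).const_mul (-ω)).congr_deriv
      (by linear_combination cos (ω * x) * hω))
  obtain ⟨k, hk⟩ := cos_eq_zero_iff.1 hx0
  exact ⟨k, by rwa [← div_div, ← hk, mul_div_cancel_left₀ _ hω0]⟩

end Liouville

section Interlacing

theorem StrictMonoOn.apply_notMem_Ioo {β : Type*} [Preorder β] {θ : ℕ → β} {n : ℕ}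
    (h : StrictMonoOn θ (Iic n)) {j m : ℕ} (hj : j < n) (hm : m ≤ n) :
    θ m ∉ Ioo (θ j) (θ (j + 1)) := by
  rintro ⟨h₁, h₂⟩
  have := (h.lt_iff_lt (mem_Iic.2 hj.le) (mem_Iic.2 hm)).1 h₁
  have := (h.lt_iff_lt (mem_Iic.2 hm) (mem_Iic.2 hj)).1 h₂
  omega

variable {t : ℤ → ℝ} {θ : ℕ → ℝ} {n : ℕ}

theorem exists_add_le_of_forall_exists_mem_Ioo (ht : StrictMono t)
    (hgap : ∀ j < n, ∃ k, t k ∈ Ioo (θ j) (θ (j + 1))) {i : ℕ} {k : ℤ} (hk : t k < θ i) :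
    ∀ d, i + d ≤ n → ∃ k', k + d ≤ k' ∧ t k' < θ (i + d) := by
  intro d
  induction d with
  | zero => exact fun _ => ⟨k, by simp, hk⟩
  | succ d ih =>
    intro hd
    obtain ⟨k', hkk', hk'⟩ := ih (by omega)
    obtain ⟨k'', h₁, h₂⟩ := hgap (i + d) (by omega)
    have : k' < k'' := ht.lt_iff_lt.1 (hk'.trans h₁)
    exact ⟨k'', by push_cast; omega, h₂⟩

theorem apply_le_of_forall_exists_mem_Ioo (ht : StrictMono t)
    (hgap : ∀ j < n, ∃ k, t k ∈ Ioo (θ j) (θ (j + 1))) (h0 : t 0 = θ 0) :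
    ∀ i ≤ n, t i ≤ θ i := by
  intro i hi
  rcases Nat.eq_zero_or_pos i with rfl | hi0
  · simp [h0]
  obtain ⟨k₀, h₁, h₂⟩ := hgap 0 (by omega)
  have hk₀ : 0 < k₀ := ht.lt_iff_lt.1 (h0 ▸ h₁)
  obtain ⟨k, hk, hkθ⟩ := exists_add_le_of_forall_exists_mem_Ioo ht hgap h₂ (i - 1) (by omega)
  rw [show 1 + (i - 1) = i by omega] at hkθ
  exact (ht.monotone (by omega)).trans hkθ.le

theorem le_apply_of_forall_exists_mem_Ioo (ht : StrictMono t)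
    (hgap : ∀ j < n, ∃ k, t k ∈ Ioo (θ j) (θ (j + 1))) (hn : t n = θ n) :
    ∀ i ≤ n, θ i ≤ t i := by
  intro i hi
  rcases hi.lt_or_eq with hi | rfl
  · obtain ⟨k, h₁, h₂⟩ := hgap i hi
    obtain ⟨k', hk', hk'θ⟩ :=
      exists_add_le_of_forall_exists_mem_Ioo ht hgap h₂ (n - (i + 1)) (by omega)
    rw [show i + 1 + (n - (i + 1)) = n by omega, ← hn] at hk'θ
    have : k' < n := ht.lt_iff_lt.1 hk'θ
    exact h₁.le.trans (ht.monotone (by omega))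
  · exact hn.ge

end Interlacing

structure IsGaussLobattoNodes (N : ℕ) (ξ : ℕ → ℝ) : Prop where
  one_le : 1 ≤ N
  first : ξ 0 = -1
  last : ξ N = 1
  strictMonoOn : StrictMonoOn ξ (Iic N)
  isRoot : ∀ i, 0 < i → i < N → (derivative (legendreP N)).eval (ξ i) = 0

namespace IsGaussLobattoNodes

variable {N : ℕ} {ξ : ℕ → ℝ} (h : IsGaussLobattoNodes N ξ)
include h

theorem mem_Icc {j : ℕ} (hj : j ≤ N) : ξ j ∈ Icc (-1) 1 :=
  ⟨h.first ▸ h.strictMonoOn.monotoneOn (mem_Iic.2 N.zero_le) (mem_Iic.2 hj) j.zero_le,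
    h.last ▸ h.strictMonoOn.monotoneOn (mem_Iic.2 hj) (mem_Iic.2 le_rfl) hj⟩

theorem strictMonoOn_arccos : StrictMonoOn (fun j => arccos (ξ (N - j))) (Iic N) :=
  fun i hi j hj hij => strictAntiOn_arccos (h.mem_Icc (Nat.sub_le N j)) (h.mem_Icc (Nat.sub_le N i))
    (h.strictMonoOn (mem_Iic.2 (Nat.sub_le N j)) (mem_Iic.2 (Nat.sub_le N i))
      (by simp only [mem_Iic] at hi hj; omega))

/-- The `N + 1` nodes are roots of `(1 - X²) P_N'`, whose degree is only `N + 1`. -/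
theorem isRoot_iff (y : ℝ) :
    ((1 - X ^ 2) * derivative (legendreP N)).IsRoot y ↔ ∃ j ≤ N, ξ j = y := by
  classical
  have hne : (1 - X ^ 2 : ℝ[X]) * derivative (legendreP N) ≠ 0 := by
    refine mul_ne_zero (fun h0 => by simpa using congrArg (eval 0) h0) ?_
    rw [Ne, derivative_eq_zero, natDegree_legendreP]
    exact Nat.one_le_iff_ne_zero.1 h.one_le
  have hdeg : ((1 - X ^ 2 : ℝ[X]) * derivative (legendreP N)).natDegree ≤ N + 1 := by
    have h1 : (1 - X ^ 2 : ℝ[X]).natDegree ≤ 2 := by compute_degree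
    have h2 := natDegree_derivative_le (legendreP N)
    rw [natDegree_legendreP] at h2
    have := h.one_le
    exact natDegree_mul_le.trans (by omega)
  have hcard : ((Finset.range (N + 1)).image ξ).card = N + 1 := by
    rw [Finset.card_image_of_injOn, Finset.card_range]
    exact h.strictMonoOn.injOn.mono fun j hj => by simpa [Nat.lt_succ_iff] using hj
  rw [isRoot_iff_mem_of_natDegree_le_card hne ?_ (hcard ▸ hdeg)]
  · simp
  · simp only [Finset.mem_image, Finset.mem_range, forall_exists_index, and_imp,
      forall_apply_eq_imp_iff₂, IsRoot.def, eval_mul]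
    intro j hj
    rcases Nat.eq_zero_or_pos j with rfl | hj0
    · simp [h.first]
    rcases (Nat.lt_succ_iff.1 hj).lt_or_eq with hjN | rfl
    · rw [h.isRoot j hj0 hjN, mul_zero]
    · simp [h.last]

theorem liouville_eq_zero_iff {x : ℝ} (hx : x ∈ Icc 0 π) :
    liouville (derivative (legendreP N)) x = 0 ↔ ∃ j ≤ N, x = arccos (ξ (N - j)) := by
  rw [_root_.liouville_eq_zero_iff _ hx, h.isRoot_iff]
  constructor
  · rintro ⟨m, hm, hmx⟩
    exact ⟨N - m, Nat.sub_le N m, by rw [Nat.sub_sub_self hm, hmx, arccos_cos hx.1 hx.2]⟩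
  · rintro ⟨m, -, rfl⟩
    exact ⟨N - m, Nat.sub_le N m,
      (cos_arccos (h.mem_Icc (Nat.sub_le N m)).1 (h.mem_Icc (Nat.sub_le N m)).2).symm⟩

theorem areConsecutiveZeros {j : ℕ} (hj : j < N) :
    AreConsecutiveZeros (liouville (derivative (legendreP N)))
      (arccos (ξ (N - j))) (arccos (ξ (N - (j + 1)))) := by
  have hθ := h.strictMonoOn_arccos
  have hIcc : ∀ y, arccos y ∈ Icc 0 π := fun y => ⟨arccos_nonneg y, arccos_le_pi y⟩
  refine ⟨hθ (mem_Iic.2 hj.le) (mem_Iic.2 hj) (lt_add_one j),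
    (h.liouville_eq_zero_iff (hIcc _)).2 ⟨j, hj.le, rfl⟩,
    (h.liouville_eq_zero_iff (hIcc _)).2 ⟨j + 1, hj, rfl⟩, fun x hx hx0 => ?_⟩
  obtain ⟨m, hm, rfl⟩ := (h.liouville_eq_zero_iff
    ⟨(arccos_nonneg _).trans hx.1.le, hx.2.le.trans (arccos_le_pi _)⟩).1 hx0
  exact hθ.apply_notMem_Ioo hj hm hx

end IsGaussLobattoNodes

/-- Sündermann's estimate: the Gauss–Lobatto angles `θ_i = arccos ξ_{N−i}`,
where the Gauss–Lobatto nodes `ξ_0 = −1 < ξ_1 < ... < ξ_N = 1` have interior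
nodes the roots of `P_N'`, satisfy `θ_i ∈ [2iπ/(2N+1), (2i+1)π/(2N+1)]`. -/
theorem sundermann_estimate (N : ℕ) (hN : 1 ≤ N) (ξ : ℕ → ℝ)
    (hfirst : ξ 0 = -1) (hlast : ξ N = 1)
    (hmono : ∀ i < N, ξ i < ξ (i + 1))
    (hroots : ∀ i, 0 < i → i < N → ((legendreP N).derivative).eval (ξ i) = 0) :
    ∀ i ≤ N,
      (2 * (i : ℝ) * Real.pi) / (2 * (N : ℝ) + 1) ≤ Real.arccos (ξ (N - i)) ∧
      Real.arccos (ξ (N - i)) ≤ ((2 * (i : ℝ) + 1) * Real.pi) / (2 * (N : ℝ) + 1) := by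
  have hGL : IsGaussLobattoNodes N ξ :=
    ⟨hN, hfirst, hlast, strictMonoOn_Iic_of_lt_succ hmono, hroots⟩
  set ω : ℝ := N + 1 / 2
  have hω : (N : ℝ) * (N + 1) + 1 / 4 = ω ^ 2 := by ring
  have hω0 : 0 < ω := by positivity
  have hlow := apply_le_of_forall_exists_mem_Ioo (t := fun k : ℤ => k * π / ω)
    (θ := fun j => arccos (ξ (N - j))) (fun a b hab => by dsimp only; gcongr)
    (fun j hj => (hGL.areConsecutiveZeros hj).exists_int_mul_pi_div_mem_Ioo _
      (derivative_legendreP_ode N) (arccos_nonneg _) (arccos_le_pi _) hω hω0.ne')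
    (by simp [hlast])
  have hup := le_apply_of_forall_exists_mem_Ioo (t := fun k : ℤ => (2 * k + 1) * π / (2 * ω))
    (θ := fun j => arccos (ξ (N - j))) (fun a b hab => by dsimp only; gcongr)
    (fun j hj => (hGL.areConsecutiveZeros hj).exists_two_mul_int_add_one_mul_pi_div_mem_Ioo _
      (derivative_legendreP_ode N) (arccos_nonneg _) (arccos_le_pi _) hω hω0.ne')
    (by simp only [Int.cast_natCast, tsub_self, hfirst, arccos_neg_one, ω]; field_simp)
  intro i hi
  constructor
  · convert hlow i hi using 1
    simp only [Int.cast_natCast, ω]; field_simp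
  · convert hup i hi using 1
    simp only [Int.cast_natCast, ω]; field_simp
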